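/- Let (θ_n)_{n≥0} be an inexact BCD-PR output satisfying Assumptions (A1)–(A3). Assume in addition that ∇f is L-Lipschitz on Θ and that τ_n^− ≥ 1 for all n ≥ 1. Then the first-order variation is finite: Σ_{n=0}^∞ | ⟨∇f(θ_{n+1}), θ_n − θ_{n+1}⟩ | ≤ (L+1) f(θ_0) + (L+2) m Σ_{n=1}^∞ Δ_n < ∞. -/

import Mathlib

/-!
Block `i` of step `n + 1` is `Δ_{n+1}`-optimal for the proximal problem `g_{n+1}^{(i)}`; comparing
it with the previous value `θ_n^{(i)}` gives `f(after) + (τ/2)‖θ_{n+1}^{(i)} - θ_n^{(i)}‖² ≤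
f(before) + Δ_{n+1}`. Summing over the blocks (the intermediate points telescope) and using
`τ ≥ 1` yields the sufficient decrease `f(θ_{n+1}) + ½‖θ_{n+1} - θ_n‖² ≤ f(θ_n) + m Δ_{n+1}`.
By the descent lemma for an `L`-Lipschitz gradient, the first-order term differs from
`f(θ_n) - f(θ_{n+1})` by at most `(L/2)‖θ_{n+1} - θ_n‖²`, which the sufficient decrease bounds
again. The resulting termwise bound `(L+1)(f(θ_n) - f(θ_{n+1})) + (L+2) m Δ_{n+1}` telescopes,
and `f ≥ 0`.
-/

noncomputable section

open scoped RealInnerProductSpace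

namespace BCD5

/-- The `i`-th block space `ℝ^{I_i}`. -/
abbrev Blk {m : ℕ} (I : Fin m → ℕ) (i : Fin m) : Type := EuclideanSpace ℝ (Fin (I i))

/-- The full parameter space `ℝ^{I_1 + ⋯ + I_m}`, as an ℓ²-product of the blocks. -/
abbrev Full {m : ℕ} (I : Fin m → ℕ) : Type := PiLp 2 (fun i : Fin m => EuclideanSpace ℝ (Fin (I i)))

/-- The point whose blocks `j < i` come from `a`, block `i` is `x`, and blocks `j > i`
come from `b`. -/
def mixUpd {m : ℕ} {I : Fin m → ℕ} (a b : Full I) (i : Fin m) (x : Blk I i) : Full I :=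
  WithLp.toLp 2 (Function.update (fun j => if j < i then a j else b j) i x)

/-- The marginal loss `f_n^{(i)}(x) = f(θ_n^{(1)},…,θ_n^{(i-1)}, x, θ_{n-1}^{(i+1)},…)`. -/
def fb {m : ℕ} {I : Fin m → ℕ} (f : Full I → ℝ) (θ : ℕ → Full I) (n : ℕ) (i : Fin m)
    (x : Blk I i) : ℝ :=
  f (mixUpd (θ n) (θ (n - 1)) i x)

/-- The proximally regularized marginal loss
`g_n^{(i)}(x) = f_n^{(i)}(x) + (τ_n^{(i)}/2)‖x - θ_{n-1}^{(i)}‖²`. -/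
def gb {m : ℕ} {I : Fin m → ℕ} (f : Full I → ℝ) (θ : ℕ → Full I) (τ : ℕ → Fin m → ℝ)
    (n : ℕ) (i : Fin m) (x : Blk I i) : ℝ :=
  fb f θ n i x + τ n i / 2 * ‖x - θ (n - 1) i‖ ^ 2

/-- The optimality gap `Δ_n = max_i ( g_n^{(i)}(θ_n^{(i)}) - inf_{Θ^{(i)}} g_n^{(i)} )`. -/
def gap {m : ℕ} {I : Fin m → ℕ} (f : Full I → ℝ) (θ : ℕ → Full I)
    (S : ∀ i : Fin m, Set (Blk I i)) (τ : ℕ → Fin m → ℝ) (n : ℕ) : ℝ :=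
  ⨆ i, (gb f θ τ n i (θ n i) - sInf (gb f θ τ n i '' S i))

open Set

theorem abs_sub_sub_inner_gradient_le {F : Type*} [NormedAddCommGroup F]
    [InnerProductSpace ℝ F] [CompleteSpace F] {f : F → ℝ} {s : Set F} (hs : Convex ℝ s)
    (hf : ∀ z ∈ s, DifferentiableAt ℝ f z) {K : NNReal} (hK : LipschitzOnWith K (gradient f) s)
    {x y : F} (hx : x ∈ s) (hy : y ∈ s) :
    |f y - f x - ⟪gradient f x, y - x⟫| ≤ K / 2 * ‖y - x‖ ^ 2 := by
  set v := y - x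
  have hseg : ∀ t ∈ Icc (0 : ℝ) 1, x + t • v ∈ s := fun t ht => hs.add_smul_sub_mem hx hy ht
  have hderiv : ∀ t ∈ Icc (0 : ℝ) 1, HasDerivAt
      (fun t : ℝ => f (x + t • v) - f x - t * ⟪gradient f x, v⟫)
      ⟪gradient f (x + t • v) - gradient f x, v⟫ t := by
    intro t ht
    have hline : HasDerivAt (fun t : ℝ => x + t • v) v t := by
      simpa using ((hasDerivAt_id t).smul_const v).const_add x
    have := (((hf _ (hseg t ht)).hasGradientAt.hasFDerivAt.comp_hasDerivAt t hline).sub_const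
      (f x)).fun_sub ((hasDerivAt_id t).mul_const ⟪gradient f x, v⟫)
    simpa [inner_sub_left] using this
  have hbound : ∀ t ∈ Ico (0 : ℝ) 1,
      ‖⟪gradient f (x + t • v) - gradient f x, v⟫‖ ≤ K * t * ‖v‖ ^ 2 := by
    intro t ht
    have hLip : ‖gradient f (x + t • v) - gradient f x‖ ≤ K * (t * ‖v‖) := by
      simpa [← dist_eq_norm, norm_smul, abs_of_nonneg ht.1] using
        hK.dist_le_mul _ (hseg t (Ico_subset_Icc_self ht)) _ hx
    calc ‖⟪gradient f (x + t • v) - gradient f x, v⟫‖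
        ≤ ‖gradient f (x + t • v) - gradient f x‖ * ‖v‖ := norm_inner_le_norm _ _
      _ ≤ K * (t * ‖v‖) * ‖v‖ := by gcongr
      _ = K * t * ‖v‖ ^ 2 := by ring
  have := image_norm_le_of_norm_deriv_right_le_deriv_boundary
    (f := fun t : ℝ => f (x + t • v) - f x - t * ⟪gradient f x, v⟫)
    (B := fun t => K / 2 * t ^ 2 * ‖v‖ ^ 2) (B' := fun t => K * t * ‖v‖ ^ 2)
    (fun t ht => (hderiv t ht).continuousAt.continuousWithinAt)
    (fun t ht => (hderiv t (Ico_subset_Icc_self ht)).hasDerivWithinAt)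
    (by simp) (fun t => (((hasDerivAt_pow 2 t).const_mul _).mul_const _).congr_deriv (by ring))
    hbound (right_mem_Icc.2 zero_le_one)
  simpa [v] using this

theorem abs_le_of_sufficient_decrease {a F F' D e L : ℝ} (hL : 0 ≤ L) (hD : 0 ≤ D) (he : 0 ≤ e)
    (hdec : F' + D ≤ F + e) (ha : |F - F' - a| ≤ L * D) :
    |a| ≤ (L + 1) * (F - F') + (L + 2) * e := by
  have hLD : L * D ≤ L * (F - F' + e) := mul_le_mul_of_nonneg_left (by linarith) hL
  rw [abs_le] at ha ⊢
  constructor <;> linarith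

theorem summable_and_tsum_le_of_le_mul_sub_succ {a F b : ℕ → ℝ} {K : ℝ} (ha : ∀ n, 0 ≤ a n)
    (hF : ∀ n, 0 ≤ F n) (hK : 0 ≤ K) (hb : Summable b) (hb0 : ∀ n, 0 ≤ b n)
    (hab : ∀ n, a n ≤ K * (F n - F (n + 1)) + b n) :
    Summable a ∧ ∑' n, a n ≤ K * F 0 + ∑' n, b n := by
  have hpartial : ∀ N, ∑ n ∈ Finset.range N, a n ≤ K * F 0 + ∑' n, b n := by
    intro N
    calc ∑ n ∈ Finset.range N, a n
        ≤ ∑ n ∈ Finset.range N, (K * (F n - F (n + 1)) + b n) := Finset.sum_le_sum fun n _ => hab n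
      _ = K * (F 0 - F N) + ∑ n ∈ Finset.range N, b n := by
        rw [Finset.sum_add_distrib, ← Finset.mul_sum, Finset.sum_range_sub' F]
      _ ≤ K * F 0 + ∑' n, b n := by
        have := hb.sum_le_tsum (Finset.range N) fun n _ => hb0 n
        linarith [mul_nonneg hK (hF N)]
  exact ⟨summable_of_sum_range_le ha hpartial, Real.tsum_le_of_sum_range_le ha hpartial⟩

theorem PiLp.convex_setOf_forall_mem {p : ENNReal} {ι : Type*} {E : ι → Type*}
    [∀ i, AddCommGroup (E i)] [∀ i, Module ℝ (E i)] {S : ∀ i, Set (E i)}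
    (hS : ∀ i, Convex ℝ (S i)) : Convex ℝ {x : PiLp p E | ∀ i, x i ∈ S i} :=
  fun _ hx _ hy _ _ ha hb hab i => hS i (hx i) (hy i) ha hb hab

section Sweep

variable {m : ℕ} {I : Fin m → ℕ}

def sweep (a b : Full I) (k : ℕ) : Full I :=
  WithLp.toLp 2 fun j => if (j : ℕ) < k then a j else b j

theorem sweep_zero (a b : Full I) : sweep a b 0 = b :=
  PiLp.ext fun j => by simp [sweep]

theorem sweep_self_of_le (a b : Full I) {k : ℕ} (hk : m ≤ k) : sweep a b k = a :=
  PiLp.ext fun j => by simp [sweep, show (j : ℕ) < k by omega]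

theorem mixUpd_apply_left (a b : Full I) (i : Fin m) : mixUpd a b i (a i) = sweep a b (i + 1) := by
  refine PiLp.ext fun j => ?_
  rcases lt_trichotomy j i with hji | rfl | hij
  · simp [mixUpd, sweep, hji.ne, hji, hji.not_gt]
  · simp [mixUpd, sweep]
  · simp [mixUpd, sweep, hij.ne', hij.not_gt, hij.not_ge]

theorem mixUpd_apply_right (a b : Full I) (i : Fin m) : mixUpd a b i (b i) = sweep a b i := by
  refine PiLp.ext fun j => ?_
  rcases lt_trichotomy j i with hji | rfl | hij
  · simp [mixUpd, sweep, hji.ne, hji]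
  · simp [mixUpd, sweep]
  · simp [mixUpd, sweep, hij.ne', hij.not_gt]

theorem sum_sub_sweep_succ (f : Full I → ℝ) (a b : Full I) :
    ∑ i : Fin m, (f (sweep a b (i + 1)) - f (sweep a b i)) = f a - f b := by
  rw [Fin.sum_univ_eq_sum_range (fun k => f (sweep a b (k + 1)) - f (sweep a b k)),
    Finset.sum_range_sub (fun k => f (sweep a b k)), sweep_zero, sweep_self_of_le a b le_rfl]

end Sweep

section Gap

variable {m : ℕ} {I : Fin m → ℕ} {S : ∀ i : Fin m, Set (Blk I i)} {f : Full I → ℝ}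
  {θ : ℕ → Full I} {τ : ℕ → Fin m → ℝ} {n : ℕ}

theorem gb_nonneg (hf0 : ∀ x, 0 ≤ f x) {i : Fin m} (hτ : 0 ≤ τ n i) (x : Blk I i) :
    0 ≤ gb f θ τ n i x :=
  add_nonneg (hf0 _) (by positivity)

theorem gb_le_gb_add_gap (hf0 : ∀ x, 0 ≤ f x) {i : Fin m} (hτ : 0 ≤ τ n i) {x : Blk I i}
    (hx : x ∈ S i) : gb f θ τ n i (θ n i) ≤ gb f θ τ n i x + gap f θ S τ n := by
  have hinf : sInf (gb f θ τ n i '' S i) ≤ gb f θ τ n i x :=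
    csInf_le ⟨0, forall_mem_image.2 fun z _ => gb_nonneg hf0 hτ z⟩ (mem_image_of_mem _ hx)
  have hsup : gb f θ τ n i (θ n i) - sInf (gb f θ τ n i '' S i) ≤ gap f θ S τ n :=
    le_ciSup (finite_range fun j => gb f θ τ n j (θ n j) - sInf (gb f θ τ n j '' S j)).bddAbove i
  linarith

theorem gap_nonneg (hf0 : ∀ x, 0 ≤ f x) (hτ : ∀ i, 0 ≤ τ n i) (hθ : ∀ i, θ n i ∈ S i) :
    0 ≤ gap f θ S τ n :=
  Real.iSup_nonneg fun i => sub_nonneg.2 <|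
    csInf_le ⟨0, forall_mem_image.2 fun z _ => gb_nonneg hf0 (hτ i) z⟩ (mem_image_of_mem _ (hθ i))

theorem sufficient_decrease (hf0 : ∀ x, 0 ≤ f x) (hτ : ∀ i, 1 ≤ τ (n + 1) i)
    (hθ : ∀ i, θ n i ∈ S i) :
    f (θ (n + 1)) + 1 / 2 * ‖θ (n + 1) - θ n‖ ^ 2 ≤ f (θ n) + m * gap f θ S τ (n + 1) := by
  set p := sweep (θ (n + 1)) (θ n)
  have hblock : ∀ i : Fin m, f (p (i + 1)) + 1 / 2 * ‖θ (n + 1) i - θ n i‖ ^ 2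
      ≤ f (p i) + gap f θ S τ (n + 1) := by
    intro i
    have h := gb_le_gb_add_gap (θ := θ) hf0 (zero_le_one.trans (hτ i)) (hθ i)
    simp only [gb, fb, Nat.add_sub_cancel, mixUpd_apply_left, mixUpd_apply_right, sub_self,
      norm_zero] at h
    nlinarith [hτ i, sq_nonneg ‖θ (n + 1) i - θ n i‖]
  have hsum := Finset.sum_le_sum fun i (_ : i ∈ Finset.univ) => hblock i
  have htel := sum_sub_sweep_succ f (θ (n + 1)) (θ n)
  rw [PiLp.norm_sq_eq_of_L2]
  simp only [Finset.sum_add_distrib, Finset.sum_sub_distrib, ← Finset.mul_sum, Finset.sum_const,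
    Finset.card_univ, Fintype.card_fin, nsmul_eq_mul] at hsum htel ⊢
  simp only [PiLp.sub_apply] at hsum ⊢
  linarith

end Gap

theorem stmt5_general {m : ℕ} {I : Fin m → ℕ}
    (S : ∀ i : Fin m, Set (Blk I i))
    (hSconv : ∀ i, Convex ℝ (S i))
    (f : Full I → ℝ) (hf : ContDiff ℝ 1 f) (hf0 : ∀ x, 0 ≤ f x)
    (τ : ℕ → Fin m → ℝ)
    (θ : ℕ → Full I) (hθ : ∀ n i, θ n i ∈ S i)
    -- (A3): summable optimality gaps
    (hA3 : Summable (fun n : ℕ => gap f θ S τ (n + 1)))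
    -- ∇f is L₀-Lipschitz on Θ
    (L₀ : ℝ) (hL₀ : 0 < L₀)
    (hLipf : LipschitzOnWith (Real.toNNReal L₀) (gradient f)
      {x : Full I | ∀ i, x i ∈ S i})
    -- τ_n⁻ ≥ 1 for all n ≥ 1
    (hτ1 : ∀ n : ℕ, 1 ≤ n → ∀ i, 1 ≤ τ n i) :
    Summable (fun n : ℕ => |⟪gradient f (θ (n + 1)), θ n - θ (n + 1)⟫|) ∧
      (∑' n : ℕ, |⟪gradient f (θ (n + 1)), θ n - θ (n + 1)⟫|) ≤
        (L₀ + 1) * f (θ 0) + (L₀ + 2) * m * ∑' n : ℕ, gap f θ S τ (n + 1) := by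
  have hτ : ∀ n i, 1 ≤ τ (n + 1) i := fun n => hτ1 (n + 1) n.succ_pos
  have hgap : ∀ n, 0 ≤ gap f θ S τ (n + 1) := fun n =>
    gap_nonneg hf0 (fun i => zero_le_one.trans (hτ n i)) (hθ (n + 1))
  have hquad : ∀ n, |f (θ n) - f (θ (n + 1)) - ⟪gradient f (θ (n + 1)), θ n - θ (n + 1)⟫|
      ≤ L₀ * (1 / 2 * ‖θ (n + 1) - θ n‖ ^ 2) := fun n => by
    have := abs_sub_sub_inner_gradient_le (PiLp.convex_setOf_forall_mem hSconv)
      (fun z _ => hf.differentiable one_ne_zero z) hLipf (hθ (n + 1)) (hθ n)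
    rw [Real.coe_toNNReal _ hL₀.le, norm_sub_rev] at this
    linarith
  have hterm : ∀ n, |⟪gradient f (θ (n + 1)), θ n - θ (n + 1)⟫|
      ≤ (L₀ + 1) * (f (θ n) - f (θ (n + 1))) + (L₀ + 2) * m * gap f θ S τ (n + 1) := fun n => by
    rw [mul_assoc]
    exact abs_le_of_sufficient_decrease hL₀.le (by positivity) (mul_nonneg m.cast_nonneg (hgap n))
      (sufficient_decrease hf0 (hτ n) (hθ n)) (hquad n)
  rw [← tsum_mul_left]
  exact summable_and_tsum_le_of_le_mul_sub_succ (fun n => abs_nonneg _) (fun n => hf0 _)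
    (by linarith) (hA3.mul_left _) (fun n => mul_nonneg (by positivity) (hgap n)) hterm

/-- **Finite first-order variation.** If moreover `∇f` is `L`-Lipschitz on `Θ` and
`τ_n⁻ ≥ 1` for all `n ≥ 1`, then
`Σ_{n≥0} |⟨∇f(θ_{n+1}), θ_n - θ_{n+1}⟩| ≤ (L+1) f(θ_0) + (L+2) m Σ_{n≥1} Δ_n < ∞`. -/
theorem stmt5 {m : ℕ} (hm : 0 < m) {I : Fin m → ℕ}
    (S : ∀ i : Fin m, Set (Blk I i))
    (hSne : ∀ i, (S i).Nonempty) (hSconv : ∀ i, Convex ℝ (S i))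
    (f : Full I → ℝ) (hf : ContDiff ℝ 1 f) (hf0 : ∀ x, 0 ≤ f x)
    (L : Fin m → ℝ) (hL : ∀ i, 0 < L i)
    -- (A1): block-wise Lipschitz gradient
    (hA1 : ∀ (i : Fin m) (b : Full I), (∀ j, b j ∈ S j) →
      LipschitzOnWith (Real.toNNReal (L i))
        (fun x : Blk I i => gradient f (WithLp.toLp 2 (Function.update b i x))) (S i))
    -- (A2): compact sublevel sets
    (hA2 : ∀ a : ℝ, IsCompact {x : Full I | (∀ i, x i ∈ S i) ∧ f x ≤ a})
    (τ : ℕ → Fin m → ℝ) (hτ : ∀ n i, 0 < τ n i)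
    (θ : ℕ → Full I) (hθ : ∀ n i, θ n i ∈ S i)
    -- (A3): summable optimality gaps
    (hA3 : Summable (fun n : ℕ => gap f θ S τ (n + 1)))
    -- ∇f is L₀-Lipschitz on Θ
    (L₀ : ℝ) (hL₀ : 0 < L₀)
    (hLipf : LipschitzOnWith (Real.toNNReal L₀) (gradient f)
      {x : Full I | ∀ i, x i ∈ S i})
    -- τ_n⁻ ≥ 1 for all n ≥ 1
    (hτ1 : ∀ n : ℕ, 1 ≤ n → ∀ i, 1 ≤ τ n i) :
    Summable (fun n : ℕ => |⟪gradient f (θ (n + 1)), θ n - θ (n + 1)⟫|) ∧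
      (∑' n : ℕ, |⟪gradient f (θ (n + 1)), θ n - θ (n + 1)⟫|) ≤
        (L₀ + 1) * f (θ 0) + (L₀ + 2) * m * ∑' n : ℕ, gap f θ S τ (n + 1) :=
  stmt5_general S hSconv f hf hf0 τ θ hθ hA3 L₀ hL₀ hLipf hτ1

end BCD5
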